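/- In the Clifford algebra generated by 4N Majorana operators α_j, β_j (j = 1,...,2N on a ring), the fermion parity P_F = ∏_{j=1}^{2N} (i β_j α_j) equals (−1)^{f+1} ∏_{j=1}^{2N} (i β_j α_{j+1}) where indices are taken with f-twisted boundary conditions α_{j+2N} = (−1)^f α_j, β_{j+2N} = (−1)^f β_j. -/

import Mathlib

/-!
In the cyclic product `β₁ α₂ β₂ α₃ ⋯ β_{2N} α₁` the factor `α₁` can be moved to the front past
`4N - 1` generators that all anticommute with it, after which the product regroups as
`-∏ α_j β_j = -∏ (-β_j α_j) = -∏ β_j α_j`, the last step because `2N` is even. The boundary sign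
`(-1)^f` and the prefactor `(-1)^(f+1)` multiply to `-1`, which cancels this sign.
-/

section

variable {A : Type*} [Ring A]

theorem commute_mul_of_anticommute {x y z : A} (hy : x * y = -(y * x))
    (hz : x * z = -(z * x)) : Commute x (y * z) := by
  rw [Commute, SemiconjBy, ← mul_assoc, hy, neg_mul, mul_assoc, hz, mul_neg, neg_neg, mul_assoc]

theorem List.prod_ofFn_mul_regroup {m : ℕ} (z y : Fin (m + 1) → A) :
    z 0 * (List.ofFn fun i : Fin m => y i.castSucc * z i.succ).prod * y (Fin.last m) =
      (List.ofFn fun i => z i * y i).prod := by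
  induction m with
  | zero => simp
  | succ m ih =>
    rw [List.ofFn_succ' (fun i => z i * y i), List.prod_concat,
      ← ih (fun i => z i.castSucc) (fun i => y i.castSucc), List.ofFn_succ', List.prod_concat]
    simp [mul_assoc]

theorem List.prod_ofFn_mul_add_one {n : ℕ} [NeZero n] (a b : Fin n → A)
    (haa : ∀ i j, i ≠ j → a i * a j = -(a j * a i)) (hab : ∀ i j, a i * b j = -(b j * a i)) :
    (List.ofFn fun j => b j * a (j + 1)).prod =
      (-1) ^ (n - 1) * (List.ofFn fun j => b j * a j).prod := by
  obtain ⟨m, rfl⟩ := Nat.exists_eq_add_one_of_ne_zero (NeZero.ne n)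
  set P := (List.ofFn fun i : Fin m => b i.castSucc * a i.succ).prod
  have hP : Commute (a 0) P := Commute.list_prod_right _ _ fun x hx => by
    obtain ⟨i, rfl⟩ := List.mem_ofFn.mp hx
    exact commute_mul_of_anticommute (hab 0 _) (haa 0 _ (Fin.succ_ne_zero i).symm)
  have hneg : (List.ofFn fun j => a j * b j) = (List.ofFn fun j => b j * a j).map Neg.neg := by
    rw [List.map_ofFn]; congr 1; funext j; exact hab j j
  calc (List.ofFn fun j => b j * a (j + 1)).prod = P * (b (Fin.last m) * a 0) := by
        rw [List.ofFn_succ', List.prod_concat]; simp [P, Fin.coeSucc_eq_succ]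
    _ = -(a 0 * P * b (Fin.last m)) := by
        rw [← neg_eq_iff_eq_neg.mpr (hab 0 _), mul_neg, ← mul_assoc, hP.eq]
    _ = -(List.ofFn fun j => a j * b j).prod := by rw [List.prod_ofFn_mul_regroup]
    _ = _ := by
        rw [hneg, List.prod_map_neg, List.length_ofFn, pow_succ, mul_neg_one, neg_mul, neg_neg,
          Nat.add_sub_cancel]

end

theorem List.prod_ofFn_smul {R M : Type*} [CommMonoid R] [Monoid M] [MulAction R M]
    [IsScalarTower R M M] [SMulCommClass R M M] {n : ℕ} (c : Fin n → R) (g : Fin n → M) :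
    (List.ofFn fun i => c i • g i).prod = (∏ i, c i) • (List.ofFn g).prod := by
  induction n with
  | zero => simp
  | succ n ih => simp [List.ofFn_succ, Fin.prod_univ_succ, ih, smul_mul_smul_comm]

theorem Fin.prod_ite_val_eq {M : Type*} [CommMonoid M] {n k : ℕ} (hk : k < n) (c : M) :
    ∏ j : Fin n, (if j.val = k then c else 1) = c := by
  simpa [Fin.ext_iff] using Fintype.prod_ite_eq' (⟨k, hk⟩ : Fin n) fun _ => c

/-- **Two expressions for the fermion parity.**
In the Clifford algebra generated by the `4N` Majorana operators
`α_j, β_j` (`j = 1, …, 2N` on a ring, with `f`-twisted boundary conditions so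
that wrapping `α_{j+1}` around the ring produces a sign `(−1)^f`), the fermion
parity satisfies
`P_F = ∏_{j=1}^{2N} (i β_j α_j) = (−1)^{f+1} ∏_{j=1}^{2N} (i β_j α_{j+1})`. -/
theorem stmt7 (N : ℕ) (hN : 0 < N) (f : ℕ)
    (A : Type) [Ring A] [Algebra ℂ A]
    (α β : Fin (2 * N) → A)
    (hαα : ∀ i j, α i * α j + α j * α i = if i = j then 2 else 0)
    (hαβ : ∀ i j, α i * β j + β j * α i = 0) :
    letI : NeZero (2 * N) := ⟨by omega⟩
    ((List.finRange (2 * N)).map (fun j => Complex.I • (β j * α j))).prod =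
      ((-1 : ℂ) ^ (f + 1)) •
        ((List.finRange (2 * N)).map (fun j =>
          (if j.val = 2 * N - 1 then ((-1 : ℂ) ^ f) else 1) •
            (Complex.I • (β j * α (j + 1))))).prod := by
  have : NeZero (2 * N) := ⟨by omega⟩
  have hshift := List.prod_ofFn_mul_add_one α β
    (fun i j hij => eq_neg_of_add_eq_zero_left (by simpa [hij] using hαα i j))
    (fun i j => eq_neg_of_add_eq_zero_left (hαβ i j))
  have hodd : Odd (2 * N - 1) := ⟨N - 1, by omega⟩
  have hsign : ((-1 : ℂ) ^ f) ^ 2 = 1 := by rw [← pow_mul, mul_comm, pow_mul]; norm_num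
  simp only [← List.ofFn_eq_map, smul_smul, List.prod_ofFn_smul, Finset.prod_mul_distrib,
    Fin.prod_ite_val_eq (by omega : 2 * N - 1 < 2 * N), hshift, hodd.neg_one_pow, neg_one_mul,
    smul_neg, ← neg_smul]
  congr 1
  linear_combination (-∏ _ : Fin (2 * N), Complex.I) * hsign
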